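/- For every natural number N ≥ 1, the following identity of rational functions in q holds: ∑_{n=1}^{N} [N choose n]_{q^2} (-1)^{n-1} q^{n^2} (q^2;q^2)_{n-1}/(q;q^2)_n = ∑_{n=1}^{N} q^{2n-1}/(1-q^{2n-1}). -/
import Mathlib


open Finset

/-- q-Pochhammer symbol (a;q)_n = ∏_{k=0}^{n-1} (1 - a q^k). -/
noncomputable def qP (a q : ℂ) (n : ℕ) : ℂ := ∏ k ∈ Finset.range n, (1 - a * q ^ k)

/-- Gaussian (q-)binomial coefficient [N choose n]_q. -/
noncomputable def qBinom (q : ℂ) (N n : ℕ) : ℂ := qP q q N / (qP q q n * qP q q (N - n))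

lemma qP_succ (a q : ℂ) (n : ℕ) : qP a q (n+1) = qP a q n * (1 - a * q ^ n) := by
  simp [qP, Finset.prod_range_succ]
lemma qP_succ' (a q : ℂ) (n : ℕ) : qP a q (n+1) = (1 - a) * qP (a*q) q n := by
  rw [qP, Finset.prod_range_succ']
  simp only [pow_zero, mul_one, qP]
  rw [mul_comm]
  congr 1
  apply Finset.prod_congr rfl
  intro k _
  rw [pow_succ']
  ring
lemma pow_ne_one' {q : ℂ} (hq : ‖q‖ < 1) {k : ℕ} (hk : 1 ≤ k) : q ^ k ≠ 1 := by
  intro h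
  have : ‖q ^ k‖ < 1 := by
    rw [norm_pow]
    exact pow_lt_one₀ (norm_nonneg q) hq (by omega)
  rw [h] at this; simp at this
lemma qP_pow_ne {q : ℂ} (hq : ‖q‖ < 1) {s : ℕ} (hs : 1 ≤ s) (n : ℕ) :
    qP (q^s) (q^2) n ≠ 0 := by
  rw [qP]
  apply Finset.prod_ne_zero_iff.2
  intro k _
  have h : q^s * (q^2)^k = q^(s + 2*k) := by rw [← pow_mul, ← pow_add]
  rw [h]
  intro h2
  exact pow_ne_one' hq (k := s+2*k) (by omega) (by linear_combination -h2)

section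
variable {q : ℂ} (hq : ‖q‖ < 1)

include hq in
lemma one_sub_ne {s : ℕ} (hs : 1 ≤ s) (k : ℕ) : (1:ℂ) - q^s * (q^2)^k ≠ 0 := by
  have h : q^s * (q^2)^k = q^(s + 2*k) := by rw [← pow_mul, ← pow_add]
  rw [h, sub_ne_zero]
  exact fun he => pow_ne_one' hq (k := s+2*k) (by omega) he.symm

include hq in
lemma qBinom_zero (K : ℕ) : qBinom (q^2) K 0 = 1 := by
  rw [qBinom]
  simp only [Nat.sub_zero, qP, Finset.range_zero, Finset.prod_empty, one_mul]
  exact div_self (qP_pow_ne hq (by norm_num) K)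

include hq in
lemma qBinom_self (K : ℕ) : qBinom (q^2) K K = 1 := by
  rw [qBinom]
  simp only [Nat.sub_self, qP, Finset.range_zero, Finset.prod_empty, mul_one]
  exact div_self (qP_pow_ne hq (by norm_num) K)

include hq in
lemma pascal1 (a b : ℕ) :
    qBinom (q^2) (a+b+2) (a+1) =
      (q^2)^(a+1) * qBinom (q^2) (a+b+1) (a+1) + qBinom (q^2) (a+b+1) a := by
  have hPa := qP_pow_ne hq (s:=2) (by norm_num) a
  have hPb := qP_pow_ne hq (s:=2) (by norm_num) b
  have h1 : (1:ℂ) - q^2 * (q^2)^a ≠ 0 := one_sub_ne hq (by norm_num) a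
  have h2 : (1:ℂ) - q^2 * (q^2)^b ≠ 0 := one_sub_ne hq (by norm_num) b
  have e1 : a+b+2-(a+1) = b+1 := by omega
  have e2 : a+b+1-(a+1) = b := by omega
  have e3 : a+b+1-a = b+1 := by omega
  rw [qBinom, qBinom, qBinom, e1, e2, e3]
  have E1 : qP (q^2) (q^2) (a+b+2) = qP (q^2) (q^2) (a+b+1) * (1 - q^2*(q^2)^(a+b+1)) := by
    rw [show a+b+2 = a+b+1+1 by omega]; exact qP_succ _ _ _
  have E2 : qP (q^2) (q^2) (a+1) = qP (q^2) (q^2) a * (1 - q^2*(q^2)^a) := qP_succ _ _ _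
  have E3 : qP (q^2) (q^2) (b+1) = qP (q^2) (q^2) b * (1 - q^2*(q^2)^b) := qP_succ _ _ _
  rw [E1, E2, E3]
  field_simp
  ring

include hq in
lemma pascal2 (a b : ℕ) :
    qBinom (q^2) (a+b+2) (a+1) =
      qBinom (q^2) (a+b+1) (a+1) + (q^2)^(b+1) * qBinom (q^2) (a+b+1) a := by
  have hPa := qP_pow_ne hq (s:=2) (by norm_num) a
  have hPb := qP_pow_ne hq (s:=2) (by norm_num) b
  have h1 : (1:ℂ) - q^2 * (q^2)^a ≠ 0 := one_sub_ne hq (by norm_num) a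
  have h2 : (1:ℂ) - q^2 * (q^2)^b ≠ 0 := one_sub_ne hq (by norm_num) b
  have e1 : a+b+2-(a+1) = b+1 := by omega
  have e2 : a+b+1-(a+1) = b := by omega
  have e3 : a+b+1-a = b+1 := by omega
  rw [qBinom, qBinom, qBinom, e1, e2, e3]
  have E1 : qP (q^2) (q^2) (a+b+2) = qP (q^2) (q^2) (a+b+1) * (1 - q^2*(q^2)^(a+b+1)) := by
    rw [show a+b+2 = a+b+1+1 by omega]; exact qP_succ _ _ _
  have E2 : qP (q^2) (q^2) (a+1) = qP (q^2) (q^2) a * (1 - q^2*(q^2)^a) := qP_succ _ _ _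
  have E3 : qP (q^2) (q^2) (b+1) = qP (q^2) (q^2) b * (1 - q^2*(q^2)^b) := qP_succ _ _ _
  rw [E1, E2, E3]
  field_simp
  ring

include hq in
lemma pascal1' {M i : ℕ} (h : i < M) :
    qBinom (q^2) (M+1) (i+1) =
      (q^2)^(i+1) * qBinom (q^2) M (i+1) + qBinom (q^2) M i := by
  obtain ⟨b, rfl⟩ : ∃ b, M = i + b + 1 := ⟨M - i - 1, by omega⟩
  rw [show i+b+1+1 = i+b+2 by omega]
  exact pascal1 hq i b

include hq in
lemma pascal2' {M i : ℕ} (h : i < M) :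
    qBinom (q^2) (M+1) (i+1) =
      qBinom (q^2) M (i+1) + (q^2)^(M-i) * qBinom (q^2) M i := by
  obtain ⟨b, rfl⟩ : ∃ b, M = i + b + 1 := ⟨M - i - 1, by omega⟩
  rw [show i+b+1+1 = i+b+2 by omega, show i+b+1-i = b+1 by omega]
  exact pascal2 hq i b

end

noncomputable def T (q : ℂ) (j m : ℕ) : ℂ :=
  qP (q^2) (q^2) m * (-1)^m * q^(m^2+2*j*m) / qP (q^(2*j+1)) (q^2) (m+1)

lemma tstep {q : ℂ} (hq : ‖q‖ < 1) (j m : ℕ) :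
    (q^2)^m * T q j m + T q j (m+1) = T q (j+1) m := by
  have hz : (1:ℂ) - q^(2*j+1) ≠ 0 := by
    simpa using one_sub_ne hq (s:=2*j+1) (by omega) 0
  have hD1 : qP (q^(2*j+1)) (q^2) (m+1) ≠ 0 := qP_pow_ne hq (by omega) _
  have hP : qP (q^2) (q^2) m ≠ 0 := qP_pow_ne hq (by norm_num) m
  have hf : (1:ℂ) - q^(2*j+1) * (q^2)^(m+1) ≠ 0 := one_sub_ne hq (by omega) _
  have hzq : q^(2*(j+1)+1) = q^(2*j+1) * q^2 := by rw [← pow_add]; congr 1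
  have R2 : qP (q^(2*(j+1)+1)) (q^2) (m+1)
      = qP (q^(2*j+1)) (q^2) (m+1) * (1 - q^(2*j+1)*(q^2)^(m+1)) / (1 - q^(2*j+1)) := by
    have h1 : qP (q^(2*j+1)) (q^2) (m+1+1)
        = (1 - q^(2*j+1)) * qP (q^(2*(j+1)+1)) (q^2) (m+1) := by
      rw [hzq]; exact qP_succ' _ _ _
    have h2 : qP (q^(2*j+1)) (q^2) (m+1+1)
        = qP (q^(2*j+1)) (q^2) (m+1) * (1 - q^(2*j+1)*(q^2)^(m+1)) := qP_succ _ _ _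
    rw [h1] at h2
    field_simp
    linear_combination h2
  have R1 : qP (q^(2*j+1)) (q^2) (m+1+1)
      = qP (q^(2*j+1)) (q^2) (m+1) * (1 - q^(2*j+1)*(q^2)^(m+1)) := qP_succ _ _ _
  have R3 : qP (q^2) (q^2) (m+1) = qP (q^2) (q^2) m * (1 - q^2*(q^2)^m) := qP_succ _ _ _
  have pe1 : q^((m+1)^2+2*j*(m+1)) = q^(m^2+2*j*m) * ((q^2)^m * q^(2*j) * q) := by
    rw [show (m+1)^2+2*j*(m+1) = (m^2+2*j*m) + (2*m+2*j+1) by ring, pow_add]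
    congr 1
    rw [show 2*m+2*j+1 = 2*m+(2*j+1) by ring, pow_add, pow_mul]
    rw [show 2*j+1 = 2*j+1 from rfl, pow_add, pow_mul]
    ring
  have pe2 : q^(m^2+2*(j+1)*m) = q^(m^2+2*j*m) * (q^2)^m := by
    rw [show m^2+2*(j+1)*m = (m^2+2*j*m) + 2*m by ring, pow_add, pow_mul]
  rw [T, T, T, R1, R2, R3, pe1, pe2]
  have hq2j : q^(2*j) = (q^2)^j := by rw [← pow_mul]
  rw [hq2j]
  field_simp
  ring

lemma Srec {q : ℂ} (hq : ‖q‖ < 1) (M j : ℕ) :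
    ∑ m ∈ range (M+1+1), qBinom (q^2) (M+1) m * T q j m
      = ∑ m ∈ range (M+1), qBinom (q^2) M m * T q (j+1) m := by
  have hR : ∀ m, qBinom (q^2) M m * T q (j+1) m
      = (q^2)^m * qBinom (q^2) M m * T q j m + qBinom (q^2) M m * T q j (m+1) := by
    intro m; rw [← tstep hq j m]; ring
  have L1 : ∑ m ∈ range (M+1+1), qBinom (q^2) (M+1) m * T q j m
      = ((∑ i ∈ range M, qBinom (q^2) (M+1) (i+1) * T q j (i+1))
          + qBinom (q^2) (M+1) (M+1) * T q j (M+1))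
        + qBinom (q^2) (M+1) 0 * T q j 0 := by
    rw [Finset.sum_range_succ' _ (M+1), Finset.sum_range_succ]
  have A1 : ∑ m ∈ range (M+1), (q^2)^m * qBinom (q^2) M m * T q j m
      = (∑ i ∈ range M, (q^2)^(i+1) * qBinom (q^2) M (i+1) * T q j (i+1))
        + (q^2)^0 * qBinom (q^2) M 0 * T q j 0 := Finset.sum_range_succ' _ M
  have B1 : ∑ m ∈ range (M+1), qBinom (q^2) M m * T q j (m+1)
      = (∑ i ∈ range M, qBinom (q^2) M i * T q j (i+1))
        + qBinom (q^2) M M * T q j (M+1) := Finset.sum_range_succ _ M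
  have key : ∑ i ∈ range M, qBinom (q^2) (M+1) (i+1) * T q j (i+1)
      = ∑ i ∈ range M, ((q^2)^(i+1) * qBinom (q^2) M (i+1) * T q j (i+1)
          + qBinom (q^2) M i * T q j (i+1)) := by
    apply Finset.sum_congr rfl
    intro i hi
    rw [pascal1' hq (Finset.mem_range.1 hi)]
    ring
  calc ∑ m ∈ range (M+1+1), qBinom (q^2) (M+1) m * T q j m
      = ((∑ i ∈ range M, ((q^2)^(i+1) * qBinom (q^2) M (i+1) * T q j (i+1)
          + qBinom (q^2) M i * T q j (i+1)))
          + qBinom (q^2) (M+1) (M+1) * T q j (M+1))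
        + qBinom (q^2) (M+1) 0 * T q j 0 := by rw [L1, key]
    _ = ((∑ i ∈ range M, (q^2)^(i+1) * qBinom (q^2) M (i+1) * T q j (i+1))
          + (∑ i ∈ range M, qBinom (q^2) M i * T q j (i+1))
          + 1 * T q j (M+1)) + 1 * T q j 0 := by
        rw [Finset.sum_add_distrib, qBinom_self hq, qBinom_zero hq]
    _ = (∑ m ∈ range (M+1), (q^2)^m * qBinom (q^2) M m * T q j m)
        + ∑ m ∈ range (M+1), qBinom (q^2) M m * T q j (m+1) := by
        rw [A1, B1, qBinom_self hq, qBinom_zero hq]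
        ring
    _ = ∑ m ∈ range (M+1), qBinom (q^2) M m * T q (j+1) m := by
        rw [← Finset.sum_add_distrib]
        apply Finset.sum_congr rfl
        intro m _
        rw [hR m]

lemma Sval {q : ℂ} (hq : ‖q‖ < 1) :
    ∀ M j : ℕ, ∑ m ∈ range (M+1), qBinom (q^2) M m * T q j m
      = 1/(1 - q^(2*(M+j)+1)) := by
  intro M
  induction M with
  | zero =>
    intro j
    simp only [Finset.sum_range_one, T, qBinom, qP, Finset.range_zero,
      Finset.prod_empty, Finset.prod_range_one, Nat.sub_self]
    simp
  | succ M ih =>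
    intro j
    rw [Srec hq M j, ih (j+1), show 2*(M+(j+1))+1 = 2*(M+1+j)+1 by omega]

noncomputable def Uu (q : ℂ) (i : ℕ) : ℂ :=
  (-1)^i * q^((i+1)^2) * qP (q^2) (q^2) i / qP q (q^2) (i+1)

lemma uT {q : ℂ} (hq : ‖q‖ < 1) {N m : ℕ} (hm : m ≤ N) :
    (q^2)^(N-m) * qBinom (q^2) N m * Uu q m = q^(2*N+1) * (qBinom (q^2) N m * T q 0 m) := by
  obtain ⟨d, rfl⟩ : ∃ d, N = m + d := ⟨N - m, by omega⟩
  rw [Uu, T, show m + d - m = d by omega]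
  have hd : qP q (q^2) (m+1) ≠ 0 := by
    have := qP_pow_ne hq (s:=1) le_rfl (m+1); rwa [pow_one] at this
  simp only [show 2*0+1 = 1 from rfl, pow_one, Nat.mul_zero, Nat.zero_mul, Nat.add_zero,
    Nat.mul_one]
  field_simp
  ring

lemma main_range {q : ℂ} (hq : ‖q‖ < 1) (N : ℕ) :
    ∑ i ∈ Finset.range N, qBinom (q^2) N (i+1) * Uu q i
      = ∑ i ∈ Finset.range N, q^(2*i+1) / (1 - q^(2*i+1)) := by
  induction N with
  | zero => simp
  | succ N ih =>
    have Ssum : ∑ i ∈ range (N+1), (q^2)^(N-i) * qBinom (q^2) N i * Uu q i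
        = q^(2*N+1) / (1 - q^(2*N+1)) := by
      rw [Finset.sum_congr rfl (fun i hi => uT hq (Nat.lt_succ_iff.1 (Finset.mem_range.1 hi))),
        ← Finset.mul_sum, Sval hq N 0, mul_one_div]
      norm_num
    have Ssum' : ∑ i ∈ range N, (q^2)^(N-i) * qBinom (q^2) N i * Uu q i
        = q^(2*N+1) / (1 - q^(2*N+1)) - Uu q N := by
      rw [Finset.sum_range_succ] at Ssum
      rw [Nat.sub_self, pow_zero, one_mul, qBinom_self hq, one_mul] at Ssum
      linear_combination Ssum
    have split : ∑ i ∈ range N, qBinom (q^2) (N+1) (i+1) * Uu q i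
        = (∑ i ∈ range N, qBinom (q^2) N (i+1) * Uu q i)
          + ∑ i ∈ range N, (q^2)^(N-i) * qBinom (q^2) N i * Uu q i := by
      rw [← Finset.sum_add_distrib]
      refine Finset.sum_congr rfl fun i hi => ?_
      rw [pascal2' hq (Finset.mem_range.1 hi)]
      ring
    rw [Finset.sum_range_succ, Finset.sum_range_succ, split, ih, Ssum', qBinom_self hq]
    ring

theorem stmt_18 (N : ℕ) (hN : 1 ≤ N) (q : ℂ) (hq : ‖q‖ < 1) :
    ∑ n ∈ Finset.Icc 1 N,
        qBinom (q ^ 2) N n * ((-1) ^ (n - 1) * q ^ (n ^ 2) * qP (q ^ 2) (q ^ 2) (n - 1) /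
          qP q (q ^ 2) n) =
      ∑ n ∈ Finset.Icc 1 N, q ^ (2 * n - 1) / (1 - q ^ (2 * n - 1)) := by
  have hconv : ∀ (F : ℕ → ℂ) (K : ℕ),
      ∑ n ∈ Finset.Icc 1 K, F n = ∑ i ∈ Finset.range K, F (i+1) := by
    intro F K
    rw [← Finset.Ico_add_one_right_eq_Icc, Finset.sum_Ico_eq_sum_range]
    rw [show K + 1 - 1 = K by omega]
    exact Finset.sum_congr rfl fun i _ => by rw [add_comm]
  rw [hconv, hconv]
  have lhs_eq : ∑ i ∈ Finset.range N,
        qBinom (q ^ 2) N (i+1) * ((-1) ^ (i+1 - 1) * q ^ ((i+1) ^ 2) *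
          qP (q ^ 2) (q ^ 2) (i+1 - 1) / qP q (q ^ 2) (i+1))
      = ∑ i ∈ Finset.range N, qBinom (q^2) N (i+1) * Uu q i := by
    refine Finset.sum_congr rfl fun i _ => ?_
    rw [Uu, Nat.add_sub_cancel]
  have rhs_eq : ∑ i ∈ Finset.range N, q ^ (2 * (i+1) - 1) / (1 - q ^ (2 * (i+1) - 1))
      = ∑ i ∈ Finset.range N, q^(2*i+1) / (1 - q^(2*i+1)) := by
    refine Finset.sum_congr rfl fun i _ => ?_
    rw [show 2*(i+1)-1 = 2*i+1 by omega]
  rw [lhs_eq, rhs_eq]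
  exact main_range hq N
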